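/- arXiv:1309.5644 — 5 statements merged into one kernel-verified Lean document; each statement's English description precedes it below -/
import Mathlib

section
/- Let R be a commutative ring, t ∈ R an element that is not a zero divisor, and suppose R is complete with respect to t (i.e., R = lim R/(t^n)). Let k, n ∈ ℕ and f(x) = Σ_{l ≥ k} α_l x^l ∈ R[[x]] be a power series such that the substituted series f(t + y) ∈ R[[y]] lies in the ideal (y^n). Then the leading coefficient α_k is divisible by t^n in R. -/
/-!
Truncated at degree `k + n`, the hypothesis says that `t ^ (k + n)` divides
`∑_{l < k + n} w l * t ^ l * α l` for the weights `w l = C(l, j)`, `j < n`, hence for every weight in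
their span. Since `α` vanishes below `k`, this is `t ^ k` times `∑_{m < n} w (k + m) * t ^ m * α (k + m)`.
By Vandermonde the shifted binomials `C(k + m, j)` span the same module as the `C(m, j)`, and on
`m < n` the alternating sum `∑_{j < n} (-1) ^ j C(m, j)` is the indicator of `m = 0`. So
`t ^ (k + n) ∣ t ^ k * α k`, and `t ^ k` cancels.
-/

open Finset Submodule

theorem sum_range_alternating_sum_choose_mul {R : Type*} [Ring R] {n : ℕ} (hn : 0 < n)
    (β : ℕ → R) : ∑ m ∈ range n, (∑ j ∈ range n, (-1 : R) ^ j * m.choose j) * β m = β 0 := by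
  have hindicator : ∀ m < n, ∑ j ∈ range n, (-1 : R) ^ j * m.choose j = if m = 0 then 1 else 0 := by
    intro m hm
    rw [← sum_subset (range_subset_range.2 hm) fun j _ hj ↦ by
      rw [Nat.choose_eq_zero_of_lt (by simpa using hj), Nat.cast_zero, mul_zero]]
    exact_mod_cast congrArg (Int.cast : ℤ → R) Int.alternating_sum_range_choose
  rw [sum_congr rfl fun m hm ↦ by rw [hindicator m (mem_range.1 hm)]]
  simp only [ite_mul, one_mul, zero_mul, sum_ite_eq', mem_range, hn, if_true]

theorem choose_mem_span_choose_add (R : Type*) [CommRing R] (k : ℕ) {n j : ℕ} (hj : j < n) :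
    (fun m : ℕ ↦ (m.choose j : R)) ∈
      span R ((fun i (m : ℕ) ↦ ((k + m).choose i : R)) '' Set.Iio n) := by
  induction j using Nat.strong_induction_on with
  | _ j ih =>
  have hvandermonde : (fun m : ℕ ↦ ((k + m).choose j : R)) =
      (fun m ↦ (m.choose j : R)) +
        ∑ a ∈ range j, (k.choose (a + 1) : R) • fun m : ℕ ↦ (m.choose (j - (a + 1)) : R) := by
    funext m
    simp only [Nat.add_choose_eq, Nat.sum_antidiagonal_eq_sum_range_succ
      (fun a b ↦ k.choose a * m.choose b), sum_range_succ', Nat.cast_add, Nat.cast_sum,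
      Nat.cast_mul, Pi.add_apply, Finset.sum_apply, Pi.smul_apply, smul_eq_mul,
      Nat.choose_zero_right, one_mul, Nat.sub_zero]
    exact add_comm _ _
  rw [eq_sub_of_add_eq hvandermonde.symm]
  exact sub_mem (subset_span ⟨j, hj, rfl⟩)
    (sum_mem fun a ha ↦ smul_mem _ _ (ih _ (by have := mem_range.1 ha; omega) (by omega)))

theorem pow_add_dvd_sum_range_choose_mul_pow_mul {R : Type*} [CommRing R] {t : R} {α : ℕ → R}
    {j m : ℕ} (h : t ^ m ∣ ∑ l ∈ Ico j (j + m), (l.choose j : R) * t ^ (l - j) * α l) :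
    t ^ (j + m) ∣ ∑ l ∈ range (j + m), (l.choose j : R) * t ^ l * α l := by
  rw [← sum_range_add_sum_Ico _ (Nat.le_add_right j m), sum_eq_zero fun l hl ↦ by
    rw [Nat.choose_eq_zero_of_lt (mem_range.1 hl), Nat.cast_zero, zero_mul, zero_mul], zero_add,
    sum_congr rfl fun l hl ↦ by
      rw [← pow_mul_pow_sub t (mem_Ico.1 hl).1, mul_left_comm, mul_assoc],
    ← mul_sum, pow_add]
  exact mul_dvd_mul_left _ (by simpa only [mul_assoc] using h)

theorem sum_range_add_mul_pow_mul {R : Type*} [CommRing R] (t : R) {α : ℕ → R} {k : ℕ}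
    (hk : ∀ l < k, α l = 0) (w : ℕ → R) (n : ℕ) :
    ∑ l ∈ range (k + n), w l * t ^ l * α l =
      t ^ k * ∑ m ∈ range n, w (k + m) * (t ^ m * α (k + m)) := by
  rw [sum_range_add, sum_eq_zero fun l hl ↦ by rw [hk l (mem_range.1 hl), mul_zero], zero_add,
    mul_sum]
  exact sum_congr rfl fun m _ ↦ by ring

theorem leading_coeff_dvd_of_subst_in_ideal_general {R : Type*} [CommRing R]
    (t : R) (ht : t ∈ nonZeroDivisors R)
    (k n : ℕ) (α : ℕ → R)
    (hk : ∀ l, l < k → α l = 0)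
    (hsub : ∀ j, j < n → ∀ m : ℕ,
      t ^ m ∣ ∑ l ∈ Finset.Ico j (j + m), (Nat.choose l j : R) * t ^ (l - j) * α l) :
    t ^ n ∣ α k := by
  rcases n.eq_zero_or_pos with rfl | hn
  · exact pow_zero t ▸ one_dvd _
  set β : ℕ → R := fun m ↦ t ^ m * α (k + m)
  let L : (ℕ → R) →ₗ[R] R := ∑ m ∈ range n, β m • LinearMap.proj m
  have hL (w : ℕ → R) : L w = ∑ m ∈ range n, w m * β m := by
    simp only [L, LinearMap.sum_apply, LinearMap.smul_apply, LinearMap.proj_apply, smul_eq_mul,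
      mul_comm]
  have hspan : span R ((fun i (m : ℕ) ↦ ((k + m).choose i : R)) '' Set.Iio n) ≤
      comap L (Ideal.span {t ^ n}) := by
    rw [span_le]
    rintro _ ⟨j, hj : j < n, rfl⟩
    have htrunc := pow_add_dvd_sum_range_choose_mul_pow_mul (hsub j hj (k + n - j))
    rw [Nat.add_sub_cancel' (by omega : j ≤ k + n), sum_range_add_mul_pow_mul t hk, pow_add,
      (isRegular_iff_mem_nonZeroDivisors.2 (pow_mem ht k)).left.dvd_cancel_left] at htrunc
    rwa [SetLike.mem_coe, mem_comap, hL, Ideal.mem_span_singleton]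
  have hδ := hspan <| sum_mem fun j (hj : j ∈ range n) ↦
    smul_mem _ ((-1 : R) ^ j) (choose_mem_span_choose_add R k (mem_range.1 hj))
  simpa only [mem_comap, Ideal.mem_span_singleton, hL, Finset.sum_apply, Pi.smul_apply,
    smul_eq_mul, sum_range_alternating_sum_choose_mul hn, β, pow_zero, one_mul, add_zero] using hδ

/-- Key divisibility lemma, case `r = 1`: if `R` is `t`-adically complete, `t` is not a
zero divisor, and `f(x) = Σ_{l ≥ k} α_l x^l` is such that `f(t+y) ∈ (y^n)`
(expressed `t`-adically: for each `j < n` the `y^j`-coefficient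
`Σ_l C(l,j) t^{l-j} α_l` of `f(t+y)` vanishes, i.e. all its partial sums
`Σ_{j ≤ l < j+m} C(l,j) t^{l-j} α_l` are divisible by `t^m`), then `t^n ∣ α_k`. -/
theorem leading_coeff_dvd_of_subst_in_ideal {R : Type*} [CommRing R]
    (t : R) (ht : t ∈ nonZeroDivisors R)
    (hcomplete : IsAdicComplete (Ideal.span {t}) R)
    (k n : ℕ) (α : ℕ → R)
    (hk : ∀ l, l < k → α l = 0)
    (hsub : ∀ j, j < n → ∀ m : ℕ,
      t ^ m ∣ ∑ l ∈ Finset.Ico j (j + m), (Nat.choose l j : R) * t ^ (l - j) * α l) :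
    t ^ n ∣ α k :=
  leading_coeff_dvd_of_subst_in_ideal_general t ht k n α hk hsub
end

section
/- Let R be a commutative ring and t_1, …, t_r ∈ R. For natural numbers n_1, …, n_r with N = Σ n_j, consider the N×N matrix A whose rows are indexed by pairs (i, w) with 1 ≤ i ≤ r and 0 ≤ w < n_i, and whose columns indexed by v = 1, …, N, with entry a_{(i,w),v} = C(v-1, w) · t_i^{v-1-w}. Then det(A) = Π_{i > j} (t_i - t_j)^{n_i · n_j}. -/
/-!
Row `(i, w)` of the matrix applies the functional `f ↦ (w-th Taylor coefficient of f at tᵢ)`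
to the monomials `X ^ v`. Replacing `X ^ v` by the monic polynomial
`P_{(i,w)} = (X - tᵢ) ^ w * ∏_{j<i} (X - tⱼ) ^ nⱼ`, whose degree is the position `v` of
`(i, w)`, is a unitriangular change of basis and leaves the determinant unchanged. In the new
basis the matrix is lower triangular: every later basis polynomial is divisible by
`(X - tᵢ) ^ (w + 1)`. The diagonal entry in row `(i, w)` is `∏_{j<i} (tᵢ - tⱼ) ^ nⱼ`.
-/

open Finset Polynomial

namespace Polynomial

variable {R : Type*} [CommRing R]

theorem taylor_coeff_eq_zero_of_X_sub_C_pow_dvd {a : R} {f : R[X]} {m k : ℕ}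
    (hf : (X - C a) ^ m ∣ f) (hk : k < m) : (taylor a f).coeff k = 0 := by
  obtain ⟨g, rfl⟩ := hf
  simp [taylor_mul, taylor_pow, coeff_X_pow_mul', not_le.2 hk]

theorem taylor_X_sub_C_pow_mul_coeff (a : R) (w : ℕ) (g : R[X]) :
    (taylor a ((X - C a) ^ w * g)).coeff w = g.eval a := by
  simp [taylor_mul, taylor_pow, coeff_X_pow_mul']

theorem taylor_X_pow_coeff (a : R) (v w : ℕ) :
    (taylor a (X ^ v)).coeff w = v.choose w * a ^ (v - w) := by
  rw [taylor_X_pow, coeff_X_add_C_pow, mul_comm]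

end Polynomial

theorem Matrix.det_apply_monic_eq_det_apply_X_pow {R : Type*} [CommRing R] {n : ℕ}
    (φ : Fin n → R[X] →ₗ[R] R) (p : Fin n → R[X]) (h_deg : ∀ j, (p j).natDegree = j)
    (h_monic : ∀ j, (p j).Monic) :
    (Matrix.of fun i j => φ i (p j)).det =
      (Matrix.of fun i (j : Fin n) => φ i (X ^ (j : ℕ))).det := by
  suffices Matrix.of (fun i j => φ i (p j)) =
      Matrix.of (fun i (j : Fin n) => φ i (X ^ (j : ℕ))) *
        Matrix.of (fun (i j : Fin n) => (p j).coeff i) by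
    rw [this, Matrix.det_mul, det_matrixOfPolynomials p h_deg h_monic, mul_one]
  ext i j
  have hp : p j = ∑ k ∈ range n, C ((p j).coeff k) * X ^ k :=
    (p j).as_sum_range_C_mul_X_pow' (by simp [h_deg])
  simp only [Matrix.mul_apply, Matrix.of_apply]
  rw [Fin.sum_univ_eq_sum_range (fun k => φ i (X ^ k) * (p j).coeff k)]
  conv_lhs => rw [hp]
  simp only [map_sum, C_mul', map_smul, smul_eq_mul]
  exact sum_congr rfl fun k _ => mul_comm _ _

section Blocks

variable {n : ℕ → ℕ}

theorem sum_range_add_le_sum_range {i j : ℕ} (hij : i < j) :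
    ∑ k ∈ range i, n k + n i ≤ ∑ k ∈ range j, n k := by
  rw [← sum_range_succ]
  exact sum_le_sum_of_subset (range_subset_range.2 hij)

theorem lt_or_eq_and_lt_of_sum_range_add_lt {i j w w' : ℕ} (hw' : w' < n j)
    (h : ∑ k ∈ range i, n k + w < ∑ k ∈ range j, n k + w') :
    i < j ∨ i = j ∧ w < w' := by
  rcases lt_trichotomy i j with hij | rfl | hji
  · exact .inl hij
  · exact .inr ⟨rfl, by omega⟩
  · have := sum_range_add_le_sum_range (n := n) hji
    omega

theorem eq_iff_sum_range_le_and_lt_sum_range_add {i j w : ℕ} (hw : w < n i) :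
    i = j ↔ ∑ k ∈ range j, n k ≤ ∑ k ∈ range i, n k + w ∧
      ∑ k ∈ range i, n k + w < ∑ k ∈ range j, n k + n j := by
  refine ⟨by rintro rfl; omega, fun ⟨hlo, hhi⟩ => ?_⟩
  rcases lt_trichotomy i j with hij | rfl | hji
  · have := sum_range_add_le_sum_range (n := n) hij
    omega
  · rfl
  · have := sum_range_add_le_sum_range (n := n) hji
    omega

variable {r : ℕ} {idx wt : Fin (∑ j ∈ range r, n j) → ℕ}

theorem card_filter_idx_eq
    (hblock : ∀ u, idx u < r ∧ wt u < n (idx u) ∧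
      (u : ℕ) = (∑ j ∈ range (idx u), n j) + wt u)
    {i : ℕ} (hi : i < r) :
    #{u | idx u = i} = n i := by
  have hfilter : ({u | idx u = i} : Finset (Fin _)) =
      ({u | (u : ℕ) < ∑ k ∈ range i, n k + n i} : Finset (Fin _)) \
        ({u | (u : ℕ) < ∑ k ∈ range i, n k} : Finset (Fin _)) := by
    ext u
    obtain ⟨-, hw, hu⟩ := hblock u
    rw [mem_filter, mem_sdiff, mem_filter, mem_filter,
      eq_iff_sum_range_le_and_lt_sum_range_add hw, ← hu]
    simp only [mem_univ, true_and, not_lt]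
    tauto
  have hle := sum_range_add_le_sum_range (n := n) hi
  have hsubset := monotone_filter_right univ fun (u : Fin (∑ j ∈ range r, n j)) _
    (hu : (u : ℕ) < ∑ k ∈ range i, n k) => hu.trans_le (Nat.le_add_right _ (n i))
  rw [hfilter, card_sdiff_of_subset hsubset, Fin.card_filter_val_lt, Fin.card_filter_val_lt]
  omega

theorem prod_comp_idx {M : Type*} [CommMonoid M]
    (hblock : ∀ u, idx u < r ∧ wt u < n (idx u) ∧
      (u : ℕ) = (∑ j ∈ range (idx u), n j) + wt u)
    (f : ℕ → M) :
    ∏ u, f (idx u) = ∏ i ∈ range r, f i ^ n i := by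
  rw [← prod_fiberwise_of_maps_to (t := range r) (g := idx) fun u _ => mem_range.2 (hblock u).1]
  refine prod_congr rfl fun i hi => ?_
  rw [prod_congr rfl fun u hu => by rw [(mem_filter.1 hu).2], prod_const,
    card_filter_idx_eq hblock (mem_range.1 hi)]

end Blocks

section ConfluentNewton

variable {R : Type*} [CommRing R] (t : ℕ → R) (n : ℕ → ℕ)

noncomputable def confluentNewtonPoly (i w : ℕ) : R[X] :=
  (X - C (t i)) ^ w * ∏ j ∈ range i, (X - C (t j)) ^ n j

theorem monic_confluentNewtonPoly (i w : ℕ) : (confluentNewtonPoly t n i w).Monic :=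
  ((monic_X_sub_C _).pow w).mul (monic_prod_of_monic _ _ fun _ _ => (monic_X_sub_C _).pow _)

theorem natDegree_confluentNewtonPoly [Nontrivial R] (i w : ℕ) :
    (confluentNewtonPoly t n i w).natDegree = ∑ j ∈ range i, n j + w := by
  rw [confluentNewtonPoly, ((monic_X_sub_C _).pow w).natDegree_mul
    (monic_prod_of_monic _ _ fun _ _ => (monic_X_sub_C _).pow _),
    natDegree_prod_of_monic _ _ fun _ _ => (monic_X_sub_C _).pow _]
  simp only [(monic_X_sub_C _).natDegree_pow, natDegree_X_sub_C, mul_one, add_comm]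

variable {t n}

theorem X_sub_C_pow_dvd_confluentNewtonPoly_of_le {i w m : ℕ} (hm : m ≤ w) :
    (X - C (t i)) ^ m ∣ confluentNewtonPoly t n i w :=
  (pow_dvd_pow _ hm).trans (dvd_mul_right _ _)

theorem X_sub_C_pow_dvd_confluentNewtonPoly_of_lt {i j m : ℕ} (hij : i < j) (hm : m ≤ n i)
    (w : ℕ) : (X - C (t i)) ^ m ∣ confluentNewtonPoly t n j w := by
  have hfactor : (X - C (t i)) ^ n i ∣ ∏ k ∈ range j, (X - C (t k)) ^ n k :=
    dvd_prod_of_mem (fun k => (X - C (t k)) ^ n k) (mem_range.2 hij)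
  exact (pow_dvd_pow _ hm).trans (hfactor.trans (dvd_mul_left _ _))

theorem taylor_confluentNewtonPoly_coeff_self (i w : ℕ) :
    (taylor (t i) (confluentNewtonPoly t n i w)).coeff w =
      ∏ j ∈ range i, (t i - t j) ^ n j := by
  rw [confluentNewtonPoly, taylor_X_sub_C_pow_mul_coeff, eval_prod]
  simp

end ConfluentNewton

/-- Confluent Vandermonde determinant (Claim 5.2(2)): the `N×N` matrix with rows
indexed by pairs `(i,w)` (`1 ≤ i ≤ r`, `0 ≤ w < n_i`, enumerated in lexicographic
order via `idx`, `wt`) and columns `v = 1,…,N`, with entries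
`C(v-1,w)·t_i^{v-1-w}`, has determinant `Π_{i>j}(t_i - t_j)^{n_i n_j}`. -/
theorem confluent_vandermonde_det {R : Type*} [CommRing R]
    (r : ℕ) (t : ℕ → R) (n : ℕ → ℕ)
    (idx wt : Fin (∑ j ∈ Finset.range r, n j) → ℕ)
    (hblock : ∀ u, idx u < r ∧ wt u < n (idx u) ∧
      (u : ℕ) = (∑ j ∈ Finset.range (idx u), n j) + wt u) :
    Matrix.det (fun u v : Fin (∑ j ∈ Finset.range r, n j) =>
        (Nat.choose (v : ℕ) (wt u) : R) * t (idx u) ^ ((v : ℕ) - wt u)) =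
      ∏ i ∈ Finset.range r, ∏ j ∈ Finset.range i, (t i - t j) ^ (n i * n j) := by
  nontriviality R
  let φ u : R[X] →ₗ[R] R := (lcoeff R (wt u)).comp (taylor (t (idx u)))
  let P v : R[X] := confluentNewtonPoly t n (idx v) (wt v)
  have hdeg v : (P v).natDegree = v := by
    rw [natDegree_confluentNewtonPoly, (hblock v).2.2]
  have htriangular : (Matrix.of fun u v => φ u (P v)).IsLowerTriangular := by
    intro u v huv
    obtain ⟨-, hwu, hu⟩ := hblock u
    obtain ⟨-, hwv, hv⟩ := hblock v
    refine taylor_coeff_eq_zero_of_X_sub_C_pow_dvd (m := wt u + 1) ?_ (lt_add_one _)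
    have huv' : (u : ℕ) < v := huv
    rw [hu, hv] at huv'
    rcases lt_or_eq_and_lt_of_sum_range_add_lt hwv huv' with hlt | ⟨heq, hlt⟩
    · exact X_sub_C_pow_dvd_confluentNewtonPoly_of_lt hlt hwu _
    · exact heq ▸ X_sub_C_pow_dvd_confluentNewtonPoly_of_le hlt
  calc _ = (Matrix.of fun u (v : Fin _) => φ u (X ^ (v : ℕ))).det := by
        congr; ext u v; exact (taylor_X_pow_coeff _ _ _).symm
    _ = (Matrix.of fun u v => φ u (P v)).det :=
        (Matrix.det_apply_monic_eq_det_apply_X_pow φ P hdeg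
          fun v => monic_confluentNewtonPoly t n _ _).symm
    _ = ∏ u, ∏ j ∈ range (idx u), (t (idx u) - t j) ^ n j := by
        rw [Matrix.det_of_isLowerTriangular _ htriangular]
        exact prod_congr rfl fun u _ => taylor_confluentNewtonPoly_coeff_self _ _
    _ = _ := by
        rw [prod_comp_idx hblock fun i => ∏ j ∈ range i, (t i - t j) ^ n j]
        simp only [← prod_pow, ← pow_mul, mul_comm]
end

section
/- Let R be a commutative ring and t_1, …, t_r ∈ R. For natural numbers n_1, …, n_r with N = Σ n_j and m ≥ N, consider the N×m matrix A(n_1,…,n_r; m) with rows indexed by pairs (i,w), 1 ≤ i ≤ r, 0 ≤ w < n_i, and columns v = 1,…,m, and entries C(v-1,w)·t_i^{v-1-w}. Then every N×N minor of A(n_1,…,n_r;m) is divisible by Π_{i>j}(t_i - t_j)^{n_i n_j}. -/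
/-!
Work over the universal ring `ℤ[X_k]`. For `j < i` substitute `X_i = X_j + Y` and regard the
minor as a polynomial in `Y`. The coefficient of `Y ^ k` in row `(i, w)` is `C(w + k, w)` times
row `(j, w + k)` evaluated at `X_j`, so in the multilinear expansion of the determinant a term
survives only if the shifted orders `w + k` in block `i` are pairwise distinct and at least `n_j`;
otherwise two rows are proportional. Such a term has `Y`-degree at least `n_i n_j`. The factors
`(X_i - X_j) ^ (n_i n_j)` are powers of pairwise non-associated primes of the factorial ring
`ℤ[X_k]`, so their product divides the minor as well, and we specialise `X_k ↦ t_k`.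
-/

open Finset Polynomial

namespace Matrix

variable {R : Type*} [CommRing R] {ι : Type*} [Fintype ι] [DecidableEq ι]

theorem det_eq_zero_of_rows_eq_smul {M : Matrix ι ι R} {i j : ι} (hij : i ≠ j) {a b : R}
    {v : ι → R} (hi : M i = a • v) (hj : M j = b • v) : M.det = 0 := by
  have hNj : (M.updateRow i v).updateRow j (b • v) = M.updateRow i v := by
    rw [← hj, ← updateRow_ne hij.symm (M := M) (b := v), updateRow_eq_self]
  have hzero := det_updateRow_eq_zero (M := M.updateRow i v) hij
  rw [updateRow_self] at hzero
  calc M.det = a * (M.updateRow i v).det := by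
        rw [← det_updateRow_smul, ← hi, updateRow_eq_self]
    _ = a * (b * ((M.updateRow i v).updateRow j v).det) := by
        rw [← det_updateRow_smul (M.updateRow i v) j b v, hNj]
    _ = 0 := by rw [hzero, mul_zero, mul_zero]

end Matrix

-- Expanding every row in powers of `X`, `B.det = ∑ μ, X ^ (∑ u, μ u) * C (det of coefficients)`.
theorem Polynomial.X_pow_dvd_det_of_coeff {R : Type*} [CommRing R] {ι : Type*} [Fintype ι]
    [DecidableEq ι] (B : Matrix ι ι R[X]) (N : ℕ)
    (h : ∀ μ : ι → ℕ, ∑ u, μ u < N → (Matrix.of fun u v => (B u v).coeff (μ u)).det = 0) :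
    X ^ N ∣ B.det := by
  set K := (univ.sup fun p : ι × ι => (B p.1 p.2).natDegree) + 1
  have hrows : B = fun u => ∑ k ∈ range K, (X ^ k : R[X]) • fun v => C ((B u v).coeff k) := by
    ext u v : 1
    rw [Finset.sum_apply]
    refine (as_sum_range' _ K (Nat.lt_succ_of_le ?_)).trans ?_
    · exact Finset.le_sup (f := fun p : ι × ι => (B p.1 p.2).natDegree) (mem_univ (u, v))
    · refine sum_congr rfl fun k _ => ?_
      rw [← C_mul_X_pow_eq_monomial, Pi.smul_apply, smul_eq_mul, X_pow_mul]
  have hexp := (Matrix.detRowAlternating (R := R[X]) (n := ι)).toMultilinearMap.map_sum_finset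
    (fun u k => (X ^ k : R[X]) • fun v => C ((B u v).coeff k)) (fun _ => range K)
  rw [← hrows] at hexp
  change B.det = _ at hexp
  rw [hexp]
  refine Finset.dvd_sum fun μ _ => ?_
  rw [MultilinearMap.map_smul_univ, prod_pow_eq_pow_sum, smul_eq_mul]
  change _ ∣ _ * (C.mapMatrix (Matrix.of fun u v => (B u v).coeff (μ u))).det
  rw [← RingHom.map_det]
  rcases lt_or_ge (∑ u, μ u) N with hlt | hle
  · rw [h μ hlt, map_zero, mul_zero]
    exact dvd_zero _
  · exact (pow_dvd_pow X hle).mul_right _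

theorem Finset.mul_le_sum_of_injOn_add {ι : Type*} {I : Finset ι} {w μ : ι → ℕ} {a b : ℕ}
    (hw : Set.BijOn w I (Set.Iio a)) (hinj : Set.InjOn (fun u => w u + μ u) I)
    (hb : ∀ u ∈ I, b ≤ w u + μ u) : a * b ≤ ∑ u ∈ I, μ u := by
  rw [← coe_range] at hw
  have hcard : #I = a := by simpa using card_nbij w hw.mapsTo hw.injOn hw.surjOn
  have hw_sum : ∑ u ∈ I, (w u : ℤ) = ∑ k ∈ range a, (k : ℤ) :=
    sum_nbij w hw.mapsTo hw.injOn hw.surjOn fun _ _ => rfl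
  have hcast : Set.InjOn (fun u => ((w u + μ u : ℕ) : ℤ)) I :=
    fun u hu u' hu' h => hinj hu hu' (Nat.cast_injective h)
  have hdistinct := sum_range_le_sum (s := I.image fun u => ((w u + μ u : ℕ) : ℤ)) (c := b)
    fun x hx => by
      obtain ⟨u, hu, rfl⟩ := mem_image.1 hx
      exact_mod_cast hb u hu
  rw [card_image_of_injOn hcast, sum_image hcast, hcard] at hdistinct
  simp only [sum_add_distrib, sum_const, card_range, nsmul_eq_mul, Nat.cast_add, hw_sum]
    at hdistinct
  exact_mod_cast (by linarith : (a * b : ℤ) ≤ ∑ u ∈ I, (μ u : ℤ))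

section ConfluentVandermonde

variable {S : Type*} [CommRing S] {ι κ : Type*}

/-- Entry `v` is `(e v).choose s * z ^ (e v - s)`, the `s`-th Hasse derivative of `T ^ (e v)`
at `T = z`. In the paper `e v = v - 1` and the row of `(i, w)` is `confluentRow e (t i) w`. -/
def confluentRow (e : κ → ℕ) (z : S) (s : ℕ) : κ → S :=
  fun v => ((e v).choose s : S) * z ^ (e v - s)

def confluentVandermonde (x : ι → S) (w : ι → ℕ) (e : κ → ℕ) : Matrix ι κ S :=
  Matrix.of fun u => confluentRow e (x u) (w u)

theorem confluentVandermonde_map {T : Type*} [CommRing T] (f : S →+* T)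
    (x : ι → S) (w : ι → ℕ) (e : κ → ℕ) :
    (confluentVandermonde x w e).map f = confluentVandermonde (f ∘ x) w e := by
  ext u v
  simp [confluentVandermonde, confluentRow]

theorem coeff_confluentRow_X_add_C (e : κ → ℕ) (z : S) (s k : ℕ) (v : κ) :
    (confluentRow e (X + C z) s v).coeff k =
      ((s + k).choose s : S) * confluentRow e z (s + k) v := by
  have h : (((e v).choose (s + k) * (s + k).choose s : ℕ) : S) =
      ((e v).choose s * (e v - s).choose k : ℕ) := by
    rw [Nat.choose_mul (Nat.le_add_right s k), Nat.add_sub_cancel_left]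
  push_cast at h
  simp only [confluentRow, coeff_natCast_mul, coeff_X_add_C_pow, Nat.sub_sub]
  linear_combination (-z ^ (e v - (s + k))) * h

theorem coeff_confluentRow_C (e : κ → ℕ) (z : S) (s k : ℕ) (v : κ) :
    (confluentRow e (C z) s v).coeff k = if k = 0 then confluentRow e z s v else 0 := by
  rw [confluentRow, confluentRow, ← C_pow, coeff_natCast_mul, coeff_C]
  split_ifs <;> simp

theorem pow_dvd_det_confluentVandermonde [Fintype ι] [DecidableEq ι] (e : ι → ℕ) {x : ι → S}
    {w : ι → ℕ} {x₀ y : S} {I : Finset ι} {a b : ℕ} (hxI : ∀ u ∈ I, x u = x₀ + y)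
    (hwI : Set.BijOn w I (Set.Iio a)) (hcover : ∀ k < b, ∃ u ∉ I, x u = x₀ ∧ w u = k) :
    y ^ (a * b) ∣ (confluentVandermonde x w e).det := by
  classical
  set B := confluentVandermonde (fun u => if u ∈ I then X + C x₀ else C (x u)) w e
  have hB : B.map (evalRingHom y) = confluentVandermonde x w e := by
    rw [confluentVandermonde_map]
    congr 1
    ext u
    by_cases hu : u ∈ I <;> simp [hu, hxI, add_comm]
  suffices hX : X ^ (a * b) ∣ B.det by
    simpa [← hB, RingHom.map_det] using map_dvd (evalRingHom y) hX
  refine X_pow_dvd_det_of_coeff B _ fun μ hμ => ?_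
  set Bμ := Matrix.of fun u v => (B u v).coeff (μ u)
  by_cases hout : ∃ u ∉ I, μ u ≠ 0
  · obtain ⟨u, hu, hμu⟩ := hout
    exact Matrix.det_eq_zero_of_row_eq_zero u fun v => by
      simp [Bμ, B, confluentVandermonde, hu, coeff_confluentRow_C, hμu]
  push Not at hout
  have hrow_in : ∀ u ∈ I,
      Bμ u = ((w u + μ u).choose (w u) : S) • confluentRow e x₀ (w u + μ u) := fun u hu => by
    ext v
    simp [Bμ, B, confluentVandermonde, hu, coeff_confluentRow_X_add_C]
  have hrow_out : ∀ u ∉ I, Bμ u = (1 : S) • confluentRow e (x u) (w u) := fun u hu => by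
    ext v
    simp [Bμ, B, confluentVandermonde, hu, coeff_confluentRow_C, hout u hu]
  by_contra hdet
  have hinj : Set.InjOn (fun u => w u + μ u) I := fun u hu u' hu' hsame => by
    by_contra hne
    exact hdet (Matrix.det_eq_zero_of_rows_eq_smul hne (hrow_in u hu)
      (by rw [hrow_in u' hu']; simp only at hsame; rw [hsame]))
  have hb : ∀ u ∈ I, b ≤ w u + μ u := fun u hu => by
    by_contra hlt
    obtain ⟨u', hu', hx, hw⟩ := hcover _ (not_le.1 hlt)
    exact hdet (Matrix.det_eq_zero_of_rows_eq_smul (ne_of_mem_of_not_mem hu hu')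
      (hrow_in u hu) (by rw [hrow_out u' hu', hx, hw]))
  have hdeg := mul_le_sum_of_injOn_add hwI hinj hb
  have hsub := sum_le_univ_sum_of_nonneg (s := I) (f := μ) fun _ => Nat.zero_le _
  omega

end ConfluentVandermonde

namespace MvPolynomial

variable {σ R : Type*} [CommRing R]

theorem irreducible_X_sub_X [IsDomain R] {i j : σ} (hij : i ≠ j) :
    Irreducible (X i - X j : MvPolynomial σ R) := by
  classical
  have h : (X i - X j : MvPolynomial σ R) =
      sumSMulX (Finsupp.single i 1 - Finsupp.single j 1) := by
    simp [sumSMulX, Finsupp.linearCombination_single, sub_eq_add_neg]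
  rw [h]
  refine irreducible_sumSMulX _ ⟨i, by simp [hij]⟩ fun r hr => isUnit_of_dvd_one ?_
  simpa [hij] using hr i

theorem eq_or_eq_of_X_sub_X_dvd [Nontrivial R] {i j k l : σ}
    (h : (X i - X j : MvPolynomial σ R) ∣ X k - X l) :
    k = l ∨ (k = i ∧ l = j) ∨ (k = j ∧ l = i) := by
  classical
  obtain ⟨q, hq⟩ := h
  have hsubst := congrArg (aeval fun m => (X (if m = i then j else m) : MvPolynomial σ R)) hq
  simp only [map_sub, map_mul, aeval_X, if_pos, ite_self, sub_self, zero_mul, sub_eq_zero]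
    at hsubst
  have := X_injective hsubst
  split_ifs at this <;> grind

theorem isRelPrime_X_sub_X [IsDomain R] [LinearOrder σ] {i j k l : σ} (hji : j < i)
    (hlk : l < k) (hne : ¬(i = k ∧ j = l)) :
    IsRelPrime (X i - X j : MvPolynomial σ R) (X k - X l) := by
  refine (irreducible_X_sub_X hji.ne').isRelPrime_iff_not_dvd.2 fun h => ?_
  rcases eq_or_eq_of_X_sub_X_dvd h with h | ⟨rfl, rfl⟩ | ⟨rfl, rfl⟩
  · exact hlk.ne' h
  · exact hne ⟨rfl, rfl⟩
  · exact lt_asymm hji hlk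

end MvPolynomial

theorem bijOn_wt_of_block {r : ℕ} {n : ℕ → ℕ} {idx wt : Fin (∑ j ∈ range r, n j) → ℕ}
    (hblock : ∀ u, idx u < r ∧ wt u < n (idx u) ∧ (u : ℕ) = ∑ j ∈ range (idx u), n j + wt u)
    {p : ℕ} (hp : p < r) : Set.BijOn wt {u | idx u = p} (Set.Iio (n p)) := by
  have hinj : ∀ u u', idx u = idx u' → wt u = wt u' → u = u' := fun u u' h1 h2 =>
    Fin.ext (by rw [(hblock u).2.2, (hblock u').2.2, h1, h2])
  -- `u ↦ (idx u, wt u)` is injective between two sets of size `∑ j < r, n j`.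
  have hsurj : Set.SurjOn (fun u => (⟨idx u, wt u⟩ : Σ _ : ℕ, ℕ))
      ↑(univ : Finset (Fin (∑ j ∈ range r, n j))) ↑((range r).sigma fun p => range (n p)) := by
    refine surjOn_of_injOn_of_card_le _ (fun u _ => ?_) (fun u _ u' _ h => ?_) (by simp)
    · simpa using ⟨(hblock u).1, (hblock u).2.1⟩
    · simp only [Sigma.mk.injEq, heq_eq_eq] at h
      exact hinj u u' h.1 h.2
  refine ⟨fun u hu => ?_, fun u hu u' hu' h => hinj u u' (hu.trans hu'.symm) h, fun w hw => ?_⟩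
  · simp only [Set.mem_ofPred_eq] at hu
    exact hu ▸ (hblock u).2.1
  · obtain ⟨u, -, hu⟩ := hsurj (by simpa using ⟨hp, hw⟩ : (⟨p, w⟩ : Σ _ : ℕ, ℕ) ∈ _)
    simp only [Sigma.mk.injEq, heq_eq_eq] at hu
    exact ⟨u, hu.1, hu.2⟩

theorem confluent_vandermonde_minors_dvd_general {R : Type*} [CommRing R]
    (r m : ℕ) (t : ℕ → R) (n : ℕ → ℕ)
    (idx wt : Fin (∑ j ∈ Finset.range r, n j) → ℕ)
    (hblock : ∀ u, idx u < r ∧ wt u < n (idx u) ∧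
      (u : ℕ) = (∑ j ∈ Finset.range (idx u), n j) + wt u)
    (c : Fin (∑ j ∈ Finset.range r, n j) → Fin m) :
    (∏ i ∈ Finset.range r, ∏ j ∈ Finset.range i, (t i - t j) ^ (n i * n j)) ∣
      Matrix.det (fun u v : Fin (∑ j ∈ Finset.range r, n j) =>
        (Nat.choose ((c v : ℕ)) (wt u) : R) * t (idx u) ^ (((c v : ℕ)) - wt u)) := by
  classical
  set D := (confluentVandermonde (fun u => (MvPolynomial.X (idx u) : MvPolynomial ℕ ℤ)) wt
    fun v => (c v : ℕ)).det
  have hpair : ∀ q ∈ (range r).sigma range,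
      (MvPolynomial.X q.1 - MvPolynomial.X q.2 : MvPolynomial ℕ ℤ) ^ (n q.1 * n q.2) ∣ D := by
    rintro ⟨i, j⟩ hq
    simp only [mem_sigma, mem_range] at hq
    refine pow_dvd_det_confluentVandermonde _ (I := {u | idx u = i})
      (x₀ := MvPolynomial.X j) (fun u hu => ?_) (by simpa using bijOn_wt_of_block hblock hq.1)
      fun k hk => ?_
    · rw [(mem_filter.1 hu).2, add_sub_cancel]
    · obtain ⟨u, hu, hwu⟩ := (bijOn_wt_of_block hblock (hq.2.trans hq.1)).surjOn hk
      simp only [Set.mem_ofPred_eq] at hu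
      exact ⟨u, by simp [hu, hq.2.ne], by rw [hu], hwu⟩
  have hcoprime : ((range r).sigma range : Set (Σ _ : ℕ, ℕ)).Pairwise (Function.onFun IsRelPrime
      fun q => (MvPolynomial.X q.1 - MvPolynomial.X q.2 : MvPolynomial ℕ ℤ) ^ (n q.1 * n q.2)) := by
    rintro ⟨i, j⟩ hq ⟨k, l⟩ hq' hne
    simp only [coe_sigma, Set.mem_sigma_iff, coe_range, Set.mem_Iio] at hq hq'
    exact (MvPolynomial.isRelPrime_X_sub_X hq.2 hq'.2 (by rintro ⟨rfl, rfl⟩; exact hne rfl)).pow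
  have hD := prod_dvd_of_isRelPrime hcoprime hpair
  rw [prod_sigma] at hD
  have hspec := map_dvd (MvPolynomial.aeval t).toRingHom hD
  rw [RingHom.map_det, RingHom.mapMatrix_apply, confluentVandermonde_map] at hspec
  simp only [Function.comp_def, map_prod, map_pow, map_sub, AlgHom.toRingHom_eq_coe,
    RingHom.coe_coe, MvPolynomial.aeval_X] at hspec
  exact hspec

/-- Claim 5.2(1): every `N×N` minor of the `N×m` matrix `A(n_1,…,n_r;m)` (rows indexed by
pairs `(i,w)`, `1 ≤ i ≤ r`, `0 ≤ w < n_i`, in lexicographic order via `idx`, `wt`;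
columns `v = 1,…,m`; entries `C(v-1,w)·t_i^{v-1-w}`) is divisible by
`Π_{i>j}(t_i - t_j)^{n_i n_j}`. A minor is given by an injective choice `c` of
`N` of the `m` columns. -/
theorem confluent_vandermonde_minors_dvd {R : Type*} [CommRing R]
    (r m : ℕ) (t : ℕ → R) (n : ℕ → ℕ)
    (hm : (∑ j ∈ Finset.range r, n j) ≤ m)
    (idx wt : Fin (∑ j ∈ Finset.range r, n j) → ℕ)
    (hblock : ∀ u, idx u < r ∧ wt u < n (idx u) ∧
      (u : ℕ) = (∑ j ∈ Finset.range (idx u), n j) + wt u)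
    (c : Fin (∑ j ∈ Finset.range r, n j) → Fin m) (hc : Function.Injective c) :
    (∏ i ∈ Finset.range r, ∏ j ∈ Finset.range i, (t i - t j) ^ (n i * n j)) ∣
      Matrix.det (fun u v : Fin (∑ j ∈ Finset.range r, n j) =>
        (Nat.choose ((c v : ℕ)) (wt u) : R) * t (idx u) ^ (((c v : ℕ)) - wt u)) :=
  confluent_vandermonde_minors_dvd_general r m t n idx wt hblock c
end

section
/- Let B be a commutative ring which is complete with respect to the t-adic topologies induced by certain elements, G a finite group acting continuously on B[[x]] by continuous B-algebra automorphisms σ with σ(x) = x^σ = Σ_{j≥0} λ^σ_j x^j where B is complete with respect to λ^σ_0 and λ^σ_1 is invertible. Suppose for every g ∈ G with g ≠ e, the constant term λ^g_0 ∈ B is not a zero divisor. Then the ring of invariants satisfies B[[x]]^G = B[[Π_{g∈G} x^g]], i.e., every G-invariant power series is a power series in the product Π_{g∈G} x^g. -/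
/-!
An invariant power series `f` with `f(0) = 0` is divisible by every conjugate `x^h = ρ h X`, since
`ρ h⁻¹ f = f` is divisible by `X`. These divisibilities combine to divisibility by
`P = ∏_g x^g`: applying `ρ h⁻¹` to `f = (∏_{g ∈ S} x^g) * q` with `h ∉ S` turns the product into
one whose constant term `∏_{g ∈ S} λ^{h⁻¹g}_0` is a nonzerodivisor, so `X` must divide
`ρ h⁻¹ q`. As `P` is invariant and a nonzerodivisor, the quotient `(f - f(0)) / P` is invariant
again, and iterating gives a `P`-adic expansion of `f`, which converges coefficientwise since
`X ∣ P`.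
-/

open PowerSeries
open scoped nonZeroDivisors

namespace PowerSeries

variable {R : Type*} [CommRing R]

theorem X_mem_nonZeroDivisors : (X : R⟦X⟧) ∈ R⟦X⟧⁰ :=
  isRegular_iff_mem_nonZeroDivisors.mp ⟨X_mul_injective, mul_X_injective⟩

theorem X_dvd_mul_iff_right {a q : R⟦X⟧} (ha : constantCoeff a ∈ R⁰) : X ∣ a * q ↔ X ∣ q := by
  simp only [X_dvd_iff, map_mul]
  exact ⟨mem_nonZeroDivisors_iff_right.mp ha _ ∘ (mul_comm (constantCoeff q) _).trans,
    fun hq => by rw [hq, mul_zero]⟩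

theorem exists_coeff_eq_sum_of_forall_eq_C_add_mul {P : R⟦X⟧} (hP : X ∣ P) (p : R⟦X⟧ → Prop)
    (hp : ∀ q, p q → ∃ q', p q' ∧ q = C (constantCoeff q) + P * q') {f : R⟦X⟧} (hf : p f) :
    ∃ γ : ℕ → R, ∀ m : ℕ, coeff m f = ∑ j ∈ Finset.range (m + 1), γ j * coeff m (P ^ j) := by
  choose! step hstep_p hstep using hp
  set F : ℕ → R⟦X⟧ := fun n => step^[n] f with hF
  have hF_succ (n : ℕ) : F (n + 1) = step (F n) := Function.iterate_succ_apply' step n f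
  have hFp (n : ℕ) : p (F n) := by
    induction n with
    | zero => exact hf
    | succ n ih => rw [hF_succ]; exact hstep_p _ ih
  have expansion (n : ℕ) :
      f = ∑ i ∈ Finset.range n, C (constantCoeff (F i)) * P ^ i + P ^ n * F n := by
    induction n with
    | zero => simp [hF]
    | succ n ih =>
      rw [ih, hstep _ (hFp n), Finset.sum_range_succ, hF_succ]
      ring
  refine ⟨fun j => constantCoeff (F j), fun m => ?_⟩
  have hremainder : coeff m (P ^ (m + 1) * F (m + 1)) = 0 :=
    X_pow_dvd_iff.mp ((pow_dvd_pow_of_dvd hP _).mul_right _) m (Nat.lt_succ_self m)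
  conv_lhs => rw [expansion (m + 1), map_add, hremainder, add_zero, map_sum]
  simp only [coeff_C_mul]

end PowerSeries

section Action

variable {B : Type*} [CommRing B] {G : Type*} [Group G] (ρ : G →* RingAut B⟦X⟧)

theorem map_mul_apply (a b : G) (φ : B⟦X⟧) : ρ (a * b) φ = ρ a (ρ b φ) := by
  rw [map_mul, RingAut.mul_apply]

theorem apply_X_dvd_iff (h : G) (φ : B⟦X⟧) : ρ h X ∣ φ ↔ X ∣ ρ h⁻¹ φ := by
  rw [← map_dvd_iff (ρ h⁻¹), ← map_mul_apply, inv_mul_cancel, map_one, RingAut.one_apply]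

theorem prod_apply_X_dvd_of_invariant (hnzd : ∀ g : G, g ≠ 1 → coeff 0 (ρ g X) ∈ B⁰)
    {f : B⟦X⟧} (hf : ∀ g : G, ρ g f = f) (hf0 : constantCoeff f = 0) (S : Finset G) :
    ∏ g ∈ S, ρ g X ∣ f := by
  classical
  induction S using Finset.induction_on with
  | empty => simp
  | @insert h S hhS ih =>
    obtain ⟨q, rfl⟩ := ih
    rw [Finset.prod_insert hhS, mul_comm (ρ h X)]
    refine mul_dvd_mul_left _ ((apply_X_dvd_iff ρ h q).mpr ?_)
    have hprod : constantCoeff (∏ g ∈ S, ρ (h⁻¹ * g) X) ∈ B⁰ := by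
      rw [map_prod]
      refine Submonoid.prod_mem _ fun g hg => ?_
      rw [← coeff_zero_eq_constantCoeff_apply]
      refine hnzd _ fun hg1 => hhS ?_
      rwa [inv_mul_eq_one.mp hg1]
    have hdvd : X ∣ ρ h⁻¹ ((∏ g ∈ S, ρ g X) * q) := by
      rw [hf, X_dvd_iff, hf0]
    rw [map_mul, map_prod] at hdvd
    simp only [← map_mul_apply] at hdvd
    exact (X_dvd_mul_iff_right hprod).mp hdvd

variable [Fintype G]

theorem apply_prod_apply_X (h : G) : ρ h (∏ g, ρ g X) = ∏ g, ρ g X := by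
  rw [map_prod]
  exact Fintype.prod_equiv (Equiv.mulLeft h) _ _ fun g => (map_mul_apply ρ h g X).symm

theorem prod_apply_X_mem_nonZeroDivisors : ∏ g, ρ g X ∈ B⟦X⟧⁰ :=
  Submonoid.prod_mem _ fun g _ =>
    Submonoid.map_le_iff_le_comap.mp (MulEquivClass.map_nonZeroDivisors (ρ g)).le
      X_mem_nonZeroDivisors

theorem exists_invariant_eq_C_add_prod_apply_X_mul (hlin : ∀ (g : G) (b : B), ρ g (C b) = C b)
    (hnzd : ∀ g : G, g ≠ 1 → coeff 0 (ρ g X) ∈ B⁰) {q : B⟦X⟧} (hq : ∀ g : G, ρ g q = q) :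
    ∃ q', (∀ g : G, ρ g q' = q') ∧ q = C (constantCoeff q) + (∏ g, ρ g X) * q' := by
  have hq₀ (g : G) : ρ g (q - C (constantCoeff q)) = q - C (constantCoeff q) := by
    rw [map_sub, hq, hlin]
  obtain ⟨q', hq'⟩ := prod_apply_X_dvd_of_invariant ρ hnzd hq₀ (by simp) Finset.univ
  refine ⟨q', fun g => ?_, by rw [← hq']; ring⟩
  refine (mul_cancel_left_mem_nonZeroDivisors (prod_apply_X_mem_nonZeroDivisors ρ)).mp ?_
  rw [← hq', ← hq₀ g, hq', map_mul, apply_prod_apply_X]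

end Action

theorem invariants_of_continuous_finite_group_action_general
    {B : Type*} [CommRing B] {G : Type*} [Group G] [Fintype G]
    (ρ : G →* RingAut (PowerSeries B))
    (hlin : ∀ (g : G) (b : B), ρ g (C b) = C b)
    (hnzd : ∀ g : G, g ≠ 1 → coeff 0 (ρ g X) ∈ nonZeroDivisors B)
    (f : PowerSeries B) (hf : ∀ g : G, ρ g f = f) :
    ∃ γ : ℕ → B, ∀ m : ℕ,
      coeff m f =
        ∑ j ∈ Finset.range (m + 1), γ j * coeff m ((∏ g : G, ρ g X) ^ j) := by
  have hX_dvd : X ∣ ∏ g : G, ρ g X := by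
    simpa using Finset.dvd_prod_of_mem (fun g => ρ g X) (Finset.mem_univ 1)
  exact exists_coeff_eq_sum_of_forall_eq_C_add_mul hX_dvd (fun q => ∀ g : G, ρ g q = q)
    (fun _ hq => exists_invariant_eq_C_add_prod_apply_X_mul ρ hlin hnzd hq) hf

/-- Theorem 5.5 ('Theorem G'): let a finite group `G` act continuously on `B[[x]]` by
continuous `B`-algebra automorphisms `ρ g`, given by substitution `x ↦ x^g = Σ_j λ^g_j x^j`,
with `B` complete with respect to each `λ^g_0` and each `λ^g_1` invertible (continuity is
expressed by: `ρ g f` agrees `λ^g_0`-adically with the partial substitutions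
`Σ_{l < m+k} f_l (x^g)^l`). If `λ^g_0` is not a zero divisor for every `g ≠ e`, then every
`G`-invariant power series is a power series in `Π_{g ∈ G} x^g`. -/
theorem invariants_of_continuous_finite_group_action
    {B : Type*} [CommRing B] {G : Type*} [Group G] [Fintype G]
    (ρ : G →* RingAut (PowerSeries B))
    (hlin : ∀ (g : G) (b : B), ρ g (C b) = C b)
    (hcomplete : ∀ g : G, IsAdicComplete (Ideal.span {coeff 0 (ρ g X)}) B)
    (hunit : ∀ g : G, IsUnit (coeff 1 (ρ g X)))
    (hcont : ∀ (g : G) (f : PowerSeries B) (m k : ℕ),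
      (coeff 0 (ρ g X)) ^ k ∣
        coeff m (ρ g f - ∑ l ∈ Finset.range (m + k), C (coeff l f) * (ρ g X) ^ l))
    (hnzd : ∀ g : G, g ≠ 1 → coeff 0 (ρ g X) ∈ nonZeroDivisors B)
    (f : PowerSeries B) (hf : ∀ g : G, ρ g f = f) :
    ∃ γ : ℕ → B, ∀ m : ℕ,
      coeff m f =
        ∑ j ∈ Finset.range (m + 1), γ j * coeff m ((∏ g : G, ρ g X) ^ j) :=
  invariants_of_continuous_finite_group_action_general ρ hlin hnzd f hf
end

section
/- Let R be a commutative ring with elements t_1, …, t_r such that R is t_i-adically complete for each i, the t_i are not zero divisors, and t_i - t_j is not a zero divisor for i ≠ j. Suppose f(x) ∈ R[[x]] satisfies f(x) ∈ (x)^k and f(t_i + y) ∈ (y)^{n_i} for all i, where N = Σ n_i. Then the coefficient α_k of x^k in f can be expressed as an R-linear combination of the coefficients α_l with l ≥ k + N, in which every coefficient of the linear combination is divisible by Π_{i=1}^r t_i^{n_i} (the infinite sums converging t_i-adically). -/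
/-!
Induction on `N = ∑ nᵢ`. Pick `i₀` with `n i₀ ≠ 0` and put `s = t i₀`. Since `f(s) = 0`,
`s`-adic synthetic division gives `f = (x - s) g` with `g = ∑ B_{l+1} x^l`,
`B_l = ∑_p s^p α_{l+p}`, and `B_l = 0` for `l ≤ k` because `s` is a non-zero-divisor.
The Leibniz rule `D_j f(t) = (t - s) D_j g(t) + D_{j-1} g(t)` for Hasse derivatives shows that
`g` vanishes to order `nᵢ` at `tᵢ` for `i ≠ i₀` (as `tᵢ - s` is a non-zero-divisor) and to order
`n i₀ - 1` at `s`. By induction `B_{k+1} ≈ ∑ c'_l B_{l+1}`; as `α_k = -s B_{k+1}`, substituting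
the series of each `B_{l+1}` writes `α_k` through the `α_m`. This double series converges
`J`-adically, `J = (t₁, …, t_r)`, only because the induction also keeps `c_l ∈ J^{l - (k+N)}`.
-/

open Finset Filter Ideal
open scoped nonZeroDivisors

section AdicLimits

variable {R : Type*} [CommRing R] {I : Ideal R}

def AdicTendsto (I : Ideal R) (s : ℕ → R) (x : R) : Prop :=
  ∀ m, ∀ᶠ L in atTop, x - s L ∈ I ^ m

def HasAdicSum (I : Ideal R) (u : ℕ → R) (x : R) : Prop :=
  AdicTendsto I (fun L => ∑ l ∈ range L, u l) x

theorem AdicTendsto.unique [IsHausdorff I R] {s : ℕ → R} {x y : R}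
    (hx : AdicTendsto I s x) (hy : AdicTendsto I s y) : x = y := by
  refine (IsHausdorff.eq_iff_smodEq (I := I)).2 fun m => ?_
  obtain ⟨L, hxL, hyL⟩ := ((hx m).and (hy m)).exists
  simpa [SModEq.sub_mem] using sub_sub_sub_cancel_right x y (s L) ▸ sub_mem hxL hyL

theorem AdicTendsto.add {s s' : ℕ → R} {x x' : R} (h : AdicTendsto I s x)
    (h' : AdicTendsto I s' x') : AdicTendsto I (fun L => s L + s' L) (x + x') := fun m => by
  filter_upwards [h m, h' m] with L hL hL'
  simpa [add_sub_add_comm] using add_mem hL hL'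

theorem AdicTendsto.const_mul {s : ℕ → R} {x : R} (a : R) (h : AdicTendsto I s x) :
    AdicTendsto I (fun L => a * s L) (a * x) := fun m => by
  filter_upwards [h m] with L hL
  simpa [mul_sub] using mul_mem_left (I ^ m) a hL

theorem AdicTendsto.sub {s s' : ℕ → R} {x x' : R} (h : AdicTendsto I s x)
    (h' : AdicTendsto I s' x') : AdicTendsto I (fun L => s L - s' L) (x - x') := by
  simpa [sub_eq_add_neg] using h.add (h'.const_mul (-1))

theorem hasAdicSum_zero_add_of_succ {u : ℕ → R} {x : R}
    (h : HasAdicSum I (fun l => u (l + 1)) x) : HasAdicSum I u (u 0 + x) := fun m => by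
  rw [← map_add_atTop_eq_nat 1, eventually_map]
  filter_upwards [h m] with L hL
  rwa [sum_range_succ', add_comm (∑ l ∈ range L, u (l + 1)), add_sub_add_left_eq_sub]

theorem HasAdicSum.add {u v : ℕ → R} {x y : R} (hu : HasAdicSum I u x) (hv : HasAdicSum I v y) :
    HasAdicSum I (fun l => u l + v l) (x + y) := by
  simpa [HasAdicSum, sum_add_distrib] using AdicTendsto.add hu hv

theorem HasAdicSum.sub {u v : ℕ → R} {x y : R} (hu : HasAdicSum I u x) (hv : HasAdicSum I v y) :
    HasAdicSum I (fun l => u l - v l) (x - y) := by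
  simpa [HasAdicSum, sum_sub_distrib] using AdicTendsto.sub hu hv

theorem HasAdicSum.const_mul {u : ℕ → R} {x : R} (a : R) (hu : HasAdicSum I u x) :
    HasAdicSum I (fun l => a * u l) (a * x) := by
  simpa [HasAdicSum, mul_sum] using AdicTendsto.const_mul a hu

section Tail

variable {u : ℕ → R} {b : ℕ}

theorem sum_range_sub_sum_range_mem (hu : ∀ l, u l ∈ I ^ (l - b)) {P L : ℕ} (hL : b + P ≤ L) :
    ∑ l ∈ range L, u l - ∑ l ∈ range (b + P), u l ∈ I ^ P := by
  rw [← sum_Ico_eq_sub _ hL]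
  refine sum_mem fun l hl => pow_le_pow_right ?_ (hu l)
  have := (mem_Ico.1 hl).1
  omega

theorem HasAdicSum.sub_sum_range_mem (hu : ∀ l, u l ∈ I ^ (l - b)) {x : R}
    (h : HasAdicSum I u x) (P : ℕ) : x - ∑ l ∈ range (b + P), u l ∈ I ^ P := by
  obtain ⟨L, hL, hxL⟩ := ((eventually_ge_atTop (b + P)).and (h P)).exists
  simpa using add_mem hxL (sum_range_sub_sum_range_mem hu hL)

theorem hasAdicSum_of_sub_sum_range_mem (hu : ∀ l, u l ∈ I ^ (l - b)) {x : R}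
    (h : ∀ P, x - ∑ l ∈ range (b + P), u l ∈ I ^ P) : HasAdicSum I u x := fun P => by
  filter_upwards [eventually_ge_atTop (b + P)] with L hL
  simpa using sub_mem (h P) (sum_range_sub_sum_range_mem hu hL)

theorem exists_hasAdicSum [IsPrecomplete I R] (hu : ∀ l, u l ∈ I ^ (l - b)) :
    ∃ x, HasAdicSum I u x := by
  obtain ⟨x, hx⟩ := IsPrecomplete.prec ‹_› (f := fun P => ∑ l ∈ range (b + P), u l)
    fun {P Q} hPQ => by
      simpa [SModEq.sub_mem] using
        neg_mem (sum_range_sub_sum_range_mem hu (L := b + Q) (by omega))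
  refine ⟨x, hasAdicSum_of_sub_sum_range_mem hu fun P => ?_⟩
  simpa [SModEq.sub_mem] using neg_mem ((SModEq.sub_mem).1 (hx P))

end Tail

end AdicLimits

section Division

variable {R : Type*} [CommRing R] {s : R} {α B : ℕ → R}

theorem pow_mul_mem_span_singleton_pow (s x : R) (p : ℕ) : s ^ p * x ∈ span {s} ^ p :=
  mul_mem_right _ _ (pow_mem_pow (mem_span_singleton_self s) p)

theorem exists_hasAdicSum_eq_sub_mul_succ [IsAdicComplete (span {s}) R] (α : ℕ → R) :
    ∃ B : ℕ → R, (∀ l, HasAdicSum (span {s}) (fun p => s ^ p * α (l + p)) (B l)) ∧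
      ∀ l, α l = B l - s * B (l + 1) := by
  choose B hB using fun l => exists_hasAdicSum (I := span {s}) (b := 0)
    fun p => pow_mul_mem_span_singleton_pow s (α (l + p)) p
  refine ⟨B, hB, fun l => ?_⟩
  have hrec := hasAdicSum_zero_add_of_succ (u := fun p => s ^ p * α (l + p)) (x := s * B (l + 1))
    (by convert (hB (l + 1)).const_mul s using 2 with p; ring_nf)
  rw [(hB l).unique hrec]
  simp

theorem eq_zero_of_le_of_eq_sub_mul_succ (hs : s ∈ R⁰) (hα : ∀ l, α l = B l - s * B (l + 1))
    (hB0 : B 0 = 0) {k : ℕ} (hk : ∀ l < k, α l = 0) : ∀ l ≤ k, B l = 0 := by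
  intro l hl
  induction l with
  | zero => exact hB0
  | succ l ih =>
    refine hs.1 _ ?_
    have := hα l
    rw [hk l (by omega), ih (by omega)] at this
    linear_combination this

end Division

section Hasse

variable {R : Type*} [CommRing R] {I : Ideal R}

/-- The `l`-th term of the series of the `j`-th Hasse derivative of `∑ γ_l x^l` at `a`. -/
def hasseTerm (j : ℕ) (a : R) (γ : ℕ → R) (l : ℕ) : R :=
  (l.choose j : R) * a ^ (l - j) * γ l

/-- `(∑ γ_l x^l)(a + y) ∈ (y)^n`. -/
def VanishesToOrder (γ : ℕ → R) (a : R) (n : ℕ) : Prop :=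
  ∀ j < n, HasAdicSum (span {a}) (hasseTerm j a γ) 0

theorem hasseTerm_mem_pow (j : ℕ) (a : R) (γ : ℕ → R) (l : ℕ) :
    hasseTerm j a γ l ∈ span {a} ^ (l - j) :=
  mul_mem_right _ _ (mul_mem_left _ _ (pow_mem_pow (mem_span_singleton_self a) _))

theorem hasseTerm_zero (a : R) (γ : ℕ → R) : hasseTerm 0 a γ = fun l => a ^ l * γ l := by
  ext l
  simp [hasseTerm]

theorem sum_range_hasseTerm (j : ℕ) (a : R) (γ : ℕ → R) (L : ℕ) :
    ∑ l ∈ range L, hasseTerm j a γ l = ∑ l ∈ Ico j L, hasseTerm j a γ l := by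
  refine (sum_subset (fun l hl => mem_range.2 (mem_Ico.1 hl).2) fun l hl hlj => ?_).symm
  simp [hasseTerm, Nat.choose_eq_zero_of_lt (by simp_all : l < j)]

theorem hasseTerm_zero_succ (a : R) (γ : ℕ → R) (l : ℕ) :
    hasseTerm 0 a γ (l + 1) = a * hasseTerm 0 a (fun l => γ (l + 1)) l := by
  simp only [hasseTerm, Nat.choose_zero_right, Nat.cast_one, tsub_zero, pow_succ', one_mul]
  ring

theorem hasseTerm_succ_succ (j : ℕ) (a : R) (γ : ℕ → R) (l : ℕ) :
    hasseTerm (j + 1) a γ (l + 1) =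
      a * hasseTerm (j + 1) a (fun l => γ (l + 1)) l + hasseTerm j a (fun l => γ (l + 1)) l := by
  simp only [hasseTerm, Nat.choose_succ_succ', Nat.cast_add, Nat.add_sub_add_right]
  rcases lt_or_ge l (j + 1) with hl | hl
  · simp [Nat.choose_eq_zero_of_lt hl]
  · rw [show l - j = l - (j + 1) + 1 by omega]
    ring

variable {s t : R} {α B : ℕ → R}

theorem hasseTerm_eq_sub_of_eq_sub_mul_succ (hα : ∀ l, α l = B l - s * B (l + 1)) (j : ℕ) :
    hasseTerm j t α = fun l => hasseTerm j t B l - s * hasseTerm j t (fun l => B (l + 1)) l := by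
  ext l
  simp only [hasseTerm, hα]
  ring

theorem hasAdicSum_hasseTerm_zero_of_eq_sub_mul_succ (hα : ∀ l, α l = B l - s * B (l + 1))
    (hB0 : B 0 = 0) {g : R} (hg : HasAdicSum I (hasseTerm 0 t fun l => B (l + 1)) g) :
    HasAdicSum I (hasseTerm 0 t α) ((t - s) * g) := by
  rw [hasseTerm_eq_sub_of_eq_sub_mul_succ hα, sub_mul]
  refine HasAdicSum.sub ?_ (hg.const_mul s)
  have := hasAdicSum_zero_add_of_succ (u := hasseTerm 0 t B)
    (by simpa only [hasseTerm_zero_succ] using hg.const_mul t)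
  simpa [hasseTerm, hB0] using this

theorem hasAdicSum_hasseTerm_succ_of_eq_sub_mul_succ (hα : ∀ l, α l = B l - s * B (l + 1))
    {j : ℕ} {g g' : R} (hg : HasAdicSum I (hasseTerm (j + 1) t fun l => B (l + 1)) g)
    (hg' : HasAdicSum I (hasseTerm j t fun l => B (l + 1)) g') :
    HasAdicSum I (hasseTerm (j + 1) t α) ((t - s) * g + g') := by
  rw [hasseTerm_eq_sub_of_eq_sub_mul_succ hα, show (t - s) * g + g' = t * g + g' - s * g by ring]
  refine HasAdicSum.sub ?_ (hg.const_mul s)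
  have := hasAdicSum_zero_add_of_succ (u := hasseTerm (j + 1) t B)
    (by simpa only [hasseTerm_succ_succ] using (hg.const_mul t).add hg')
  simpa [hasseTerm] using this

theorem VanishesToOrder.of_eq_sub_mul_succ [IsAdicComplete (span {t}) R]
    (hα : ∀ l, α l = B l - s * B (l + 1)) (hB0 : B 0 = 0) (hts : t - s ∈ R⁰) {n : ℕ}
    (h : VanishesToOrder α t n) : VanishesToOrder (fun l => B (l + 1)) t n := by
  choose G hG using fun j => exists_hasAdicSum (hasseTerm_mem_pow j t (fun l => B (l + 1)))
  suffices ∀ j < n, G j = 0 from fun j hj => this j hj ▸ hG j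
  intro j hj
  induction j with
  | zero =>
    exact hts.1 _ ((h 0 hj).unique (hasAdicSum_hasseTerm_zero_of_eq_sub_mul_succ hα hB0 (hG 0))).symm
  | succ j ih =>
    have := (h _ hj).unique (hasAdicSum_hasseTerm_succ_of_eq_sub_mul_succ hα (hG _) (hG j))
    rw [ih (by omega), add_zero] at this
    exact hts.1 _ this.symm

theorem VanishesToOrder.of_eq_sub_mul_succ_self [IsAdicComplete (span {s}) R]
    (hα : ∀ l, α l = B l - s * B (l + 1)) {n : ℕ} (h : VanishesToOrder α s (n + 1)) :
    VanishesToOrder (fun l => B (l + 1)) s n := by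
  intro j hj
  obtain ⟨g, hg⟩ := exists_hasAdicSum (hasseTerm_mem_pow (j + 1) s (fun l => B (l + 1)))
  obtain ⟨g', hg'⟩ := exists_hasAdicSum (hasseTerm_mem_pow j s (fun l => B (l + 1)))
  have := (h _ (by omega)).unique (hasAdicSum_hasseTerm_succ_of_eq_sub_mul_succ hα hg hg')
  rw [sub_self, zero_mul, zero_add] at this
  rwa [this]

theorem exists_eq_sub_mul_succ_of_vanishesToOrder [IsAdicComplete (span {s}) R] (hs : s ∈ R⁰)
    {n k : ℕ} (hv : VanishesToOrder α s (n + 1)) (hk : ∀ l < k, α l = 0) :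
    ∃ B : ℕ → R, (∀ l, α l = B l - s * B (l + 1)) ∧ (∀ l ≤ k, B l = 0) ∧
      ∀ l P, B l - ∑ p ∈ range P, s ^ p * α (l + p) ∈ span {s} ^ P := by
  obtain ⟨B, hB, hα⟩ := exists_hasAdicSum_eq_sub_mul_succ (s := s) α
  have hB0 : B 0 = 0 := by
    have h0 : HasAdicSum (span {s}) (fun p => s ^ p * α (0 + p)) 0 := by
      simpa only [hasseTerm_zero, zero_add] using hv 0 (Nat.succ_pos n)
    exact (hB 0).unique h0
  refine ⟨B, hα, eq_zero_of_le_of_eq_sub_mul_succ hs hα hB0 hk, fun l P => ?_⟩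
  simpa using (hB l).sub_sum_range_mem (b := 0)
    (fun p => pow_mul_mem_span_singleton_pow s (α (l + p)) p) P

end Hasse

section Transfer

variable {R : Type*} [CommRing R] {J : Ideal R} {s : R} {b : ℕ} {c : ℕ → R}

/-- If `∑ c_l B_{l+1}` approximates `B_{b+1}`, then, since `B_{l+1} = ∑_{m > l} s^{m-(l+1)} α_m`,
these are the coefficients expressing `-s B_{b+1}` through the `α_m`. -/
def transferCoeff (s : R) (b : ℕ) (c : ℕ → R) (m : ℕ) : R :=
  -s * ∑ l ∈ Ico b m, c l * s ^ (m - (l + 1))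

theorem dvd_transferCoeff {d : R} (hc : ∀ l, d ∣ c l) (m : ℕ) :
    s * d ∣ transferCoeff s b c m := by
  rw [transferCoeff, neg_mul, dvd_neg]
  exact mul_dvd_mul_left s (dvd_sum fun l _ => (hc l).mul_right _)

theorem transferCoeff_mem_pow (hs : s ∈ J) (hc : ∀ l, c l ∈ J ^ (l - b)) (m : ℕ) :
    transferCoeff s b c m ∈ J ^ (m - (b + 1)) := by
  refine mul_mem_left _ _ (sum_mem fun l hl => ?_)
  have := mul_mem_mul (hc l) (pow_mem_pow hs (m - (l + 1)))
  rw [← pow_add] at this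
  exact pow_le_pow_right (by have := mem_Ico.1 hl; omega) this

theorem sum_transferCoeff_mul (s : R) (b : ℕ) (c α : ℕ → R) (L : ℕ) :
    ∑ m ∈ Ico b L, transferCoeff s b c m * α m =
      -s * ∑ l ∈ Ico b L, c l * ∑ p ∈ range (L - (l + 1)), s ^ p * α (l + 1 + p) := by
  simp only [transferCoeff, mul_sum, sum_mul]
  rw [← sum_Ico_Ico_comm']
  refine sum_congr rfl fun l _ => ?_
  rw [sum_Ico_eq_sum_range]
  refine sum_congr rfl fun p _ => ?_
  rw [Nat.add_sub_cancel_left]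
  ring

theorem AdicTendsto.transfer {α β : ℕ → R} {x : R} (hc : ∀ l, c l ∈ J ^ (l - b))
    (hβ : ∀ l P, β l - ∑ p ∈ range P, s ^ p * α (l + 1 + p) ∈ J ^ P)
    (hx : AdicTendsto J (fun L => ∑ l ∈ Ico b L, c l * β l) x) :
    AdicTendsto J (fun L => ∑ m ∈ Ico (b + 1) L, transferCoeff s b c m * α m) (-s * x) := by
  intro m
  filter_upwards [hx m, eventually_ge_atTop (b + 1 + m)] with L hL hbL
  have hb : ∑ m ∈ Ico (b + 1) L, transferCoeff s b c m * α m =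
      ∑ m ∈ Ico b L, transferCoeff s b c m * α m := by
    rw [sum_eq_sum_Ico_succ_bot (by omega : b < L)]
    simp [transferCoeff]
  have hsplit : ∀ T : ℕ → R, -s * x - -s * ∑ l ∈ Ico b L, c l * T l =
      -s * (x - ∑ l ∈ Ico b L, c l * β l) - s * ∑ l ∈ Ico b L, c l * (β l - T l) := by
    intro T
    simp only [mul_sub, sum_sub_distrib]
    ring
  rw [hb, sum_transferCoeff_mul, hsplit]
  refine sub_mem (mul_mem_left _ _ hL) (mul_mem_left _ _ (sum_mem fun l hl => ?_))
  have := mul_mem_mul (hc l) (hβ l (L - (l + 1)))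
  rw [← pow_add] at this
  exact pow_le_pow_right (by have := mem_Ico.1 hl; omega) this

theorem adicTendsto_sum_ite_mul (I : Ideal R) (b : ℕ) (α : ℕ → R) :
    AdicTendsto I (fun L => ∑ l ∈ Ico b L, (if l = b then 1 else 0) * α l) (α b) := fun m => by
  filter_upwards [eventually_gt_atTop b] with L hL
  simp [hL]

end Transfer

section Combination

theorem prod_pow_eq_mul_prod_pow_update {ι M : Type*} [Fintype ι] [DecidableEq ι] [CommMonoid M]
    (g : ι → M) {n : ι → ℕ} {i : ι} (hi : n i ≠ 0) :
    ∏ j, g j ^ n j = g i * ∏ j, g j ^ Function.update n i (n i - 1) j := by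
  rw [Fintype.prod_eq_mul_prod_compl i, Fintype.prod_eq_mul_prod_compl i, Function.update_self,
    ← mul_assoc, ← pow_succ', Nat.sub_add_cancel (Nat.one_le_iff_ne_zero.2 hi)]
  exact congrArg _ (prod_congr rfl fun j hj => by
    rw [Function.update_of_ne (by simpa using hj)])

theorem sum_update_sub_one_add_one {ι : Type*} [Fintype ι] [DecidableEq ι] {n : ι → ℕ} {i : ι}
    (hi : n i ≠ 0) : ∑ j, Function.update n i (n i - 1) j + 1 = ∑ j, n j := by
  rw [Fintype.sum_eq_add_sum_compl i, Fintype.sum_eq_add_sum_compl i n, Function.update_self,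
    add_right_comm, Nat.sub_add_cancel (Nat.one_le_iff_ne_zero.2 hi)]
  exact congrArg _ (sum_congr rfl fun j hj => by
    rw [Function.update_of_ne (by simpa using hj)])

variable {R : Type*} [CommRing R] {r : ℕ} {t : Fin r → R}

theorem vanishesToOrder_update (htt : ∀ i j, i ≠ j → t i - t j ∈ R⁰)
    (hcomplete : ∀ i, IsAdicComplete (span {t i}) R) {n : Fin r → ℕ} {α B : ℕ → R} {i₀ : Fin r}
    (hi₀ : n i₀ ≠ 0) (hα : ∀ l, α l = B l - t i₀ * B (l + 1)) (hB0 : B 0 = 0)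
    (hv : ∀ i, VanishesToOrder α (t i) (n i)) (i : Fin r) :
    VanishesToOrder (fun l => B (l + 1)) (t i) (Function.update n i₀ (n i₀ - 1) i) := by
  have := hcomplete i
  by_cases hi : i = i₀
  · subst hi
    rw [Function.update_self]
    exact VanishesToOrder.of_eq_sub_mul_succ_self hα
      (Nat.sub_add_cancel (Nat.one_le_iff_ne_zero.2 hi₀) ▸ hv i)
  · rw [Function.update_of_ne hi]
    exact (hv i).of_eq_sub_mul_succ hα hB0 (htt i i₀ hi)

theorem exists_combination_of_vanishesToOrder (ht : ∀ i, t i ∈ R⁰)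
    (htt : ∀ i j, i ≠ j → t i - t j ∈ R⁰) (hcomplete : ∀ i, IsAdicComplete (span {t i}) R)
    (k : ℕ) (n : Fin r → ℕ) (α : ℕ → R) (hk : ∀ l < k, α l = 0)
    (hv : ∀ i, VanishesToOrder α (t i) (n i)) :
    ∃ c : ℕ → R, (∀ l, ∏ i, t i ^ n i ∣ c l) ∧
      (∀ l, c l ∈ span (Set.range t) ^ (l - (k + ∑ i, n i))) ∧
      AdicTendsto (span (Set.range t)) (fun L => ∑ l ∈ Ico (k + ∑ i, n i) L, c l * α l) (α k) := by
  obtain ⟨N, hN⟩ : ∃ N, ∑ i, n i = N := ⟨_, rfl⟩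
  induction N generalizing n α with
  | zero =>
    have hn : ∀ i, n i = 0 := fun i => sum_eq_zero_iff.1 hN i (mem_univ i)
    refine ⟨fun l => if l = k then 1 else 0, fun l => by simp [hn], fun l => ?_, ?_⟩
    · dsimp only
      split_ifs with hl <;> simp [hl]
    · simpa [hN] using adicTendsto_sum_ite_mul _ k α
  | succ N ih =>
    obtain ⟨i₀, hi₀⟩ : ∃ i₀, n i₀ ≠ 0 := by
      by_contra! h
      simp [h] at hN
    have := hcomplete i₀
    obtain ⟨B, hα, hBk, htail⟩ := exists_eq_sub_mul_succ_of_vanishesToOrder (ht i₀)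
      (Nat.sub_add_cancel (Nat.one_le_iff_ne_zero.2 hi₀) ▸ hv i₀) hk
    have hN' : ∑ i, Function.update n i₀ (n i₀ - 1) i = N := by
      have := sum_update_sub_one_add_one hi₀
      omega
    obtain ⟨c, hdvd, hmem, hconv⟩ := ih _ (fun l => B (l + 1)) (fun l hl => hBk _ hl)
      (vanishesToOrder_update htt hcomplete hi₀ hα (hBk 0 k.zero_le) hv) hN'
    rw [hN'] at hmem hconv
    have hs : t i₀ ∈ span (Set.range t) := subset_span ⟨i₀, rfl⟩
    refine ⟨transferCoeff (t i₀) (k + N) c, fun l => ?_, fun l => ?_, ?_⟩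
    · rw [prod_pow_eq_mul_prod_pow_update t hi₀]
      exact dvd_transferCoeff hdvd l
    · rw [hN, ← add_assoc]
      exact transferCoeff_mem_pow hs hmem l
    · rw [hN, ← add_assoc, hα k, hBk k le_rfl, zero_sub, ← neg_mul]
      refine hconv.transfer hmem fun l P => pow_right_mono ?_ P (htail (l + 1) P)
      exact (span_singleton_le_iff_mem _).2 hs

end Combination

/-- Strengthened conclusion of Lemma 5.1: under the hypotheses of the key divisibility
lemma, the coefficient `α_k` is an (infinite, `t`-adically convergent) `R`-linear
combination of the coefficients `α_l`, `l ≥ k + N` (`N = Σ n_i`), in which every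
coefficient of the linear combination is divisible by `Π_i t_i^{n_i}`. -/
theorem leading_coeff_combination {R : Type*} [CommRing R]
    (r : ℕ) (t : Fin r → R)
    (ht : ∀ i, t i ∈ nonZeroDivisors R)
    (htt : ∀ i j, i ≠ j → t i - t j ∈ nonZeroDivisors R)
    (hcomplete : ∀ i, IsAdicComplete (Ideal.span {t i}) R)
    (k : ℕ) (n : Fin r → ℕ) (α : ℕ → R)
    (hk : ∀ l, l < k → α l = 0)
    (hsub : ∀ i, ∀ j, j < n i → ∀ m : ℕ,
      (t i) ^ m ∣ ∑ l ∈ Finset.Ico j (j + m), (Nat.choose l j : R) * (t i) ^ (l - j) * α l) :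
    ∃ c : ℕ → R,
      (∀ l, (∏ i, t i ^ n i) ∣ c l) ∧
      (∀ m : ℕ, ∃ L : ℕ, ∀ L' : ℕ, L ≤ L' →
        α k - ∑ l ∈ Finset.Ico (k + ∑ i, n i) L', c l * α l ∈
          (Ideal.span (Set.range t)) ^ m) := by
  have hv : ∀ i, VanishesToOrder α (t i) (n i) := fun i j hj =>
    hasAdicSum_of_sub_sum_range_mem (hasseTerm_mem_pow j (t i) α) fun m => by
      rw [zero_sub, neg_mem_iff, sum_range_hasseTerm, span_singleton_pow, mem_span_singleton]
      exact hsub i j hj m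
  obtain ⟨c, hdvd, -, hconv⟩ := exists_combination_of_vanishesToOrder ht htt hcomplete k n α hk hv
  exact ⟨c, hdvd, fun m => eventually_atTop.1 (hconv m)⟩
end
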